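/- arXiv:1810.08590 — 4 statements merged into one kernel-verified Lean document; each statement's English description precedes it below -/
import Mathlib

section
/- Fix an integer d ≥ 1 and reals m₁, m₂ > 0, n_{∞,1}, n_{∞,2} > 0, and parameters α, δ, γ ∈ ℝ. Set f₁^∞(v) = n_{∞,1}(m₁/(2π))^{d/2} exp(−m₁|v|²/2). For (σ₁, σ₂, μ₁, μ₂, τ₁, τ₂) ∈ ℝ × ℝ × ℝ^d × ℝ^d × ℝ × ℝ near 0, define n_i = n_{∞,i} + σ_i, P_i = n_{∞,i} + (1/d)(τ_i − m_i|μ_i|²/n_i) for i = 1, 2, the mixture momentum μ₁₂ = δ μ₁ + (1−δ)(n₁/n₂) μ₂, the mixture pressure P₁₂ = α P₁ + (1−α)(n₁/n₂) P₂ + γ |μ₁ − (n₁/n₂)μ₂|²/n₁, and M₁₂(v) = n₁^{1+d/2}/(2π P₁₂/m₁)^{d/2} · exp(− m₁ |v n₁ − μ₁₂|² / (2 P₁₂ n₁)). Then M₁₂ is differentiable at the origin for each fixed v, with partial derivatives there: ∂_{σ₁} M₁₂ = f₁^∞(v) (1/n_{∞,1}) (1 + (α/2)(d − m₁|v|²)),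 ∂_{σ₂} M₁₂ = f₁^∞(v) (1/(2 n_{∞,2})) (1−α)(d − m₁|v|²), ∇_{μ₁} M₁₂ = f₁^∞(v) (δ m₁/n_{∞,1}) v, ∇_{μ₂} M₁₂ = f₁^∞(v) ((1−δ) m₁/n_{∞,2}) v, ∂_{τ₁} M₁₂ = f₁^∞(v) (α/(2 n_{∞,1})) ((m₁|v|²)/d − 1), and ∂_{τ₂} M₁₂ = f₁^∞(v) ((1−α)/(2 n_{∞,2})) ((m₁|v|²)/d − 1). -/
open Real

noncomputable def equilMaxwellian1 (d : ℕ) (m₁ nInf1 : ℝ) (v : EuclideanSpace ℝ (Fin d)) : ℝ :=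
  nInf1 * (m₁ / (2 * Real.pi)) ^ ((d : ℝ) / 2) * Real.exp (-m₁ * ‖v‖ ^ 2 / 2)

noncomputable def interMaxwellian12 (d : ℕ) (m₁ m₂ nInf1 nInf2 α δ γ : ℝ)
    (p : ℝ × ℝ × EuclideanSpace ℝ (Fin d) × EuclideanSpace ℝ (Fin d) × ℝ × ℝ)
    (v : EuclideanSpace ℝ (Fin d)) : ℝ :=
  let σ₁ := p.1
  let σ₂ := p.2.1
  let μ₁ := p.2.2.1
  let μ₂ := p.2.2.2.1
  let τ₁ := p.2.2.2.2.1
  let τ₂ := p.2.2.2.2.2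
  let n₁ := nInf1 + σ₁
  let n₂ := nInf2 + σ₂
  let P₁ := nInf1 + (1 / (d : ℝ)) * (τ₁ - m₁ * ‖μ₁‖ ^ 2 / n₁)
  let P₂ := nInf2 + (1 / (d : ℝ)) * (τ₂ - m₂ * ‖μ₂‖ ^ 2 / n₂)
  let μ₁₂ := δ • μ₁ + ((1 - δ) * (n₁ / n₂)) • μ₂
  let P₁₂ := α * P₁ + (1 - α) * (n₁ / n₂) * P₂ + γ * ‖μ₁ - (n₁ / n₂) • μ₂‖ ^ 2 / n₁
  n₁ ^ ((1 : ℝ) + (d : ℝ) / 2) / (2 * Real.pi * P₁₂ / m₁) ^ ((d : ℝ) / 2) *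
    Real.exp (-(m₁ * ‖n₁ • v - μ₁₂‖ ^ 2) / (2 * P₁₂ * n₁))

/-!
`M₁₂` is the Maxwellian of density `n₁`, momentum `μ₁₂` and pressure `P₁₂`. At the origin these
moments are `(n_{∞,1}, n_{∞,1}, 0)`, where that Maxwellian is `f₁^∞`, and the terms `|μ_i|²/n_i`
and `|μ₁ - (n₁/n₂)μ₂|²/n₁` vanish to second order. The chain rule therefore composes the
linearized moments with the logarithmic derivative of the Maxwellian at rest,
`(1 + d/2 - m₁|v|²/2) dn/n + (m₁|v|² - d) dP/(2n) + m₁⟨v, dμ⟩/n`.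
-/

section Calculus

variable {X F : Type*} [NormedAddCommGroup X] [NormedSpace ℝ X]
  [NormedAddCommGroup F] [InnerProductSpace ℝ F] {f g : X → ℝ} {f' g' : X →L[ℝ] ℝ} {x : X}

theorem HasFDerivAt.fun_div (hf : HasFDerivAt f f' x) (hg : HasFDerivAt g g' x) (hx : g x ≠ 0) :
    HasFDerivAt (fun y => f y / g y) ((g x)⁻¹ • f' - (f x / g x ^ 2) • g') x := by
  have h := hf.fun_mul ((hasFDerivAt_inv hx).comp x hg)
  simp only [Function.comp_def, ← div_eq_mul_inv] at h
  refine h.congr_fderiv ?_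
  ext y
  simp
  ring

theorem HasFDerivAt.rpow_const_of_pos (hf : HasFDerivAt f f' x) (hx : 0 < f x) (p : ℝ) :
    HasFDerivAt (fun y => f y ^ p) ((p * f x ^ p / f x) • f') x := by
  refine (hf.rpow_const (Or.inl hx.ne')).congr_fderiv ?_
  rw [Real.rpow_sub_one hx.ne', mul_div_assoc]

theorem HasFDerivAt.const_mul_norm_sq_div_of_eq_zero {u : X → F} {u' : X →L[ℝ] F}
    (hu : HasFDerivAt u u' x) (hux : u x = 0) (hg : HasFDerivAt g g' x) (hx : g x ≠ 0) (c : ℝ) :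
    HasFDerivAt (fun y => c * ‖u y‖ ^ 2 / g y) (0 : X →L[ℝ] ℝ) x := by
  refine ((hu.norm_sq.const_mul c).fun_div hg hx).congr_fderiv ?_
  simp [hux]

end Calculus

section Maxwellian

variable {E : Type*} [NormedAddCommGroup E] [InnerProductSpace ℝ E]

/-- `q = (n, P, μ)` is (density, pressure, momentum): bulk velocity `μ / n`, temperature `P / n`. -/
noncomputable def maxwellianOfMoments (d : ℕ) (m : ℝ) (v : E) (q : ℝ × ℝ × E) : ℝ :=
  q.1 ^ ((1 : ℝ) + (d : ℝ) / 2) / (2 * π * q.2.1 / m) ^ ((d : ℝ) / 2) *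
    exp (-(m * ‖q.1 • v - q.2.2‖ ^ 2) / (2 * q.2.1 * q.1))

variable {d : ℕ} {m N : ℝ}

theorem hasFDerivAt_maxwellianOfMoments_rest (hm : 0 < m) (hN : 0 < N) (v : E) :
    ∃ L : (ℝ × ℝ × E) →L[ℝ] ℝ, HasFDerivAt (maxwellianOfMoments d m v) L (N, N, 0) ∧
      ∀ n P μ, L (n, P, μ) = maxwellianOfMoments d m v (N, N, 0) / N *
        ((1 + d / 2 - m * ‖v‖ ^ 2 / 2) * n + (m * ‖v‖ ^ 2 - d) / 2 * P + m * inner ℝ v μ) := by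
  have hn : HasFDerivAt (𝕜 := ℝ) (fun q : ℝ × ℝ × E => q.1) _ (N, N, 0) := hasFDerivAt_fst
  have hP : HasFDerivAt (𝕜 := ℝ) (fun q : ℝ × ℝ × E => q.2.1) _ (N, N, 0) := hasFDerivAt_snd.fst
  have hμ : HasFDerivAt (𝕜 := ℝ) (fun q : ℝ × ℝ × E => q.2.2) _ (N, N, 0) := hasFDerivAt_snd.snd
  have hT := (hP.const_mul (2 * π)).fun_div (hasFDerivAt_const m _) hm.ne'
  have hprefactor := (hn.rpow_const_of_pos hN (1 + d / 2)).fun_div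
    (hT.rpow_const_of_pos (by simp; positivity) (d / 2)) (by simp; positivity)
  have hexponent := (((hn.smul_const v).sub hμ).norm_sq.const_mul m).neg.fun_div
    ((hP.const_mul 2).fun_mul hn) (by simp; positivity)
  refine ⟨_, hprefactor.fun_mul hexponent.exp, fun n P μ => ?_⟩
  simp only [Pi.sub_apply, Pi.neg_apply, sub_zero, norm_smul, norm_eq_abs, abs_of_pos hN,
    mul_inv_rev, map_smul, ContinuousLinearMap.comp_sub, ContinuousLinearMap.smul_comp, smul_neg,
    smul_add, smul_zero, add_apply, smul_apply, sub_apply, neg_apply, ContinuousLinearMap.comp_apply,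
    ContinuousLinearMap.smulRight_apply, ContinuousLinearMap.coe_fst', coe_innerSL_apply,
    inner_self_eq_norm_sq_to_K, ringHom_apply, smul_eq_mul, ContinuousLinearMap.coe_snd',
    nsmul_eq_mul, Nat.cast_ofNat, maxwellianOfMoments]
  field_simp
  ring

theorem maxwellianOfMoments_rest_eq_equilMaxwellian1 (hm : 0 < m) (hN : 0 < N)
    (v : EuclideanSpace ℝ (Fin d)) :
    maxwellianOfMoments d m v (N, N, 0) = equilMaxwellian1 d m N v := by
  have hdensity : N ^ ((1 : ℝ) + d / 2) / (2 * π * N / m) ^ ((d : ℝ) / 2)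
      = N * (m / (2 * π)) ^ ((d : ℝ) / 2) := by
    rw [rpow_add hN, rpow_one, mul_div_assoc, ← div_rpow hN.le (by positivity)]
    congr 2
    field_simp
  have hexponent : -(m * ‖N • v - 0‖ ^ 2) / (2 * N * N) = -m * ‖v‖ ^ 2 / 2 := by
    rw [sub_zero, norm_smul, norm_of_nonneg hN.le]
    field_simp
  rw [maxwellianOfMoments, equilMaxwellian1, hdensity, hexponent]

end Maxwellian

section Moments

variable {E : Type*} [NormedAddCommGroup E] [InnerProductSpace ℝ E]

local notation "𝒫" => ℝ × ℝ × E × E × ℝ × ℝ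

noncomputable def interMoments12 (d : ℕ) (m₁ m₂ nInf1 nInf2 α δ γ : ℝ) (p : 𝒫) : ℝ × ℝ × E :=
  let σ₁ := p.1
  let σ₂ := p.2.1
  let μ₁ := p.2.2.1
  let μ₂ := p.2.2.2.1
  let τ₁ := p.2.2.2.2.1
  let τ₂ := p.2.2.2.2.2
  let n₁ := nInf1 + σ₁
  let n₂ := nInf2 + σ₂
  let P₁ := nInf1 + (1 / (d : ℝ)) * (τ₁ - m₁ * ‖μ₁‖ ^ 2 / n₁)
  let P₂ := nInf2 + (1 / (d : ℝ)) * (τ₂ - m₂ * ‖μ₂‖ ^ 2 / n₂)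
  let μ₁₂ := δ • μ₁ + ((1 - δ) * (n₁ / n₂)) • μ₂
  let P₁₂ := α * P₁ + (1 - α) * (n₁ / n₂) * P₂ + γ * ‖μ₁ - (n₁ / n₂) • μ₂‖ ^ 2 / n₁
  (n₁, P₁₂, μ₁₂)

theorem interMaxwellian12_eq_comp (d : ℕ) (m₁ m₂ nInf1 nInf2 α δ γ : ℝ)
    (v : EuclideanSpace ℝ (Fin d)) :
    (fun p => interMaxwellian12 d m₁ m₂ nInf1 nInf2 α δ γ p v) =
      maxwellianOfMoments d m₁ v ∘ interMoments12 d m₁ m₂ nInf1 nInf2 α δ γ :=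
  rfl

variable (d : ℕ) (m₁ m₂ : ℝ) {nInf1 nInf2 : ℝ} (α δ γ : ℝ)

theorem interMoments12_zero (hn₂ : nInf2 ≠ 0) :
    interMoments12 d m₁ m₂ nInf1 nInf2 α δ γ (0 : 𝒫) = (nInf1, nInf1, 0) := by
  simp only [interMoments12, Prod.fst_zero, Prod.snd_zero, norm_zero, smul_zero, sub_zero,
    add_zero, Prod.mk.injEq, true_and, and_true]
  field_simp
  ring

theorem hasFDerivAt_interMoments12_zero (hn₁ : nInf1 ≠ 0) (hn₂ : nInf2 ≠ 0) :
    ∃ L : 𝒫 →L[ℝ] ℝ × ℝ × E,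
      HasFDerivAt (interMoments12 d m₁ m₂ nInf1 nInf2 α δ γ) L 0 ∧
      ∀ σ₁ σ₂ μ₁ μ₂ τ₁ τ₂, L (σ₁, σ₂, μ₁, μ₂, τ₁, τ₂) =
        (σ₁, α * τ₁ / d + (1 - α) * (σ₁ - nInf1 / nInf2 * σ₂ + nInf1 / nInf2 * τ₂ / d),
          δ • μ₁ + ((1 - δ) * (nInf1 / nInf2)) • μ₂) := by
  have hσ₁ : HasFDerivAt (𝕜 := ℝ) (fun p : 𝒫 => p.1) _ 0 := hasFDerivAt_fst
  have hσ₂ : HasFDerivAt (𝕜 := ℝ) (fun p : 𝒫 => p.2.1) _ 0 := hasFDerivAt_snd.fst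
  have hμ₁ : HasFDerivAt (𝕜 := ℝ) (fun p : 𝒫 => p.2.2.1) _ 0 :=
    hasFDerivAt_snd.snd.fst
  have hμ₂ : HasFDerivAt (𝕜 := ℝ) (fun p : 𝒫 => p.2.2.2.1) _ 0 :=
    hasFDerivAt_snd.snd.snd.fst
  have hτ₁ : HasFDerivAt (𝕜 := ℝ) (fun p : 𝒫 => p.2.2.2.2.1) _ 0 :=
    hasFDerivAt_snd.snd.snd.snd.fst
  have hτ₂ : HasFDerivAt (𝕜 := ℝ) (fun p : 𝒫 => p.2.2.2.2.2) _ 0 :=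
    hasFDerivAt_snd.snd.snd.snd.snd
  have hn₁' := hσ₁.const_add nInf1
  have hn₂' := hσ₂.const_add nInf2
  have hratio := hn₁'.fun_div hn₂' (by simpa)
  have hP₁ := ((hτ₁.sub (hμ₁.const_mul_norm_sq_div_of_eq_zero rfl hn₁' (by simpa) m₁)).const_mul
    (1 / (d : ℝ))).const_add nInf1
  have hP₂ := ((hτ₂.sub (hμ₂.const_mul_norm_sq_div_of_eq_zero rfl hn₂' (by simpa) m₂)).const_mul
    (1 / (d : ℝ))).const_add nInf2
  have hcross := (hμ₁.sub (hratio.smul hμ₂)).const_mul_norm_sq_div_of_eq_zero (by simp) hn₁'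
    (by simpa) γ
  have hP₁₂ := ((hP₁.const_mul α).add ((hratio.const_mul (1 - α)).fun_mul hP₂)).add hcross
  have hμ₁₂ := (hμ₁.const_smul δ).add ((hratio.const_mul (1 - δ)).smul hμ₂)
  refine ⟨_, hn₁'.prodMk (hP₁₂.prodMk hμ₁₂), fun σ₁ σ₂ μ₁ μ₂ τ₁ τ₂ => ?_⟩
  simp only [one_div, sub_zero, Prod.fst_zero, add_zero, Prod.snd_zero, Pi.sub_apply, norm_zero,
    ne_eq, OfNat.ofNat_ne_zero, not_false_eq_true, zero_pow, mul_zero, zero_div, sub_self,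
    ContinuousLinearMap.smulRight_zero, ContinuousLinearMap.prod_apply, ContinuousLinearMap.coe_fst',
    add_apply, smul_apply, ContinuousLinearMap.comp_apply, ContinuousLinearMap.coe_snd', smul_eq_mul,
    sub_apply, Prod.mk.injEq, and_true, true_and]
  field_simp
  ring

end Moments

theorem interMaxwellian12_hasFDerivAt_zero_general (d : ℕ) (hd : 1 ≤ d) (m₁ m₂ nInf1 nInf2 : ℝ)
    (hm₁ : 0 < m₁) (hn₁ : 0 < nInf1) (hn₂ : 0 < nInf2) (α δ γ : ℝ)
    (v : EuclideanSpace ℝ (Fin d)) :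
    ∃ L : (ℝ × ℝ × EuclideanSpace ℝ (Fin d) × EuclideanSpace ℝ (Fin d) × ℝ × ℝ) →L[ℝ] ℝ,
      HasFDerivAt (fun p => interMaxwellian12 d m₁ m₂ nInf1 nInf2 α δ γ p v) L
        (0 : ℝ × ℝ × EuclideanSpace ℝ (Fin d) × EuclideanSpace ℝ (Fin d) × ℝ × ℝ) ∧
      ∀ (σ₁ σ₂ : ℝ) (μ₁ μ₂ : EuclideanSpace ℝ (Fin d)) (τ₁ τ₂ : ℝ),
        L (σ₁, σ₂, μ₁, μ₂, τ₁, τ₂) =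
          equilMaxwellian1 d m₁ nInf1 v * (1 / nInf1) * (1 + (α / 2) * (d - m₁ * ‖v‖ ^ 2)) * σ₁
          + equilMaxwellian1 d m₁ nInf1 v * (1 / (2 * nInf2)) * (1 - α) * (d - m₁ * ‖v‖ ^ 2) * σ₂
          + equilMaxwellian1 d m₁ nInf1 v * (δ * m₁ / nInf1) * (inner ℝ v μ₁ : ℝ)
          + equilMaxwellian1 d m₁ nInf1 v * ((1 - δ) * m₁ / nInf2) * (inner ℝ v μ₂ : ℝ)
          + equilMaxwellian1 d m₁ nInf1 v * (α / (2 * nInf1)) * (m₁ * ‖v‖ ^ 2 / d - 1) * τ₁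
          + equilMaxwellian1 d m₁ nInf1 v * ((1 - α) / (2 * nInf2)) * (m₁ * ‖v‖ ^ 2 / d - 1) * τ₂ := by
  obtain ⟨LG, hG, hLG⟩ := hasFDerivAt_interMoments12_zero (E := EuclideanSpace ℝ (Fin d)) d m₁ m₂
    α δ γ hn₁.ne' hn₂.ne'
  obtain ⟨LM, hM, hLM⟩ := hasFDerivAt_maxwellianOfMoments_rest (d := d) hm₁ hn₁ v
  have hG₀ := interMoments12_zero (E := EuclideanSpace ℝ (Fin d)) d m₁ m₂ (nInf1 := nInf1) α δ γ
    hn₂.ne'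
  refine ⟨LM.comp LG, interMaxwellian12_eq_comp .. ▸ (hG₀ ▸ hM).comp 0 hG,
    fun σ₁ σ₂ μ₁ μ₂ τ₁ τ₂ => ?_⟩
  have hd₀ : (d : ℝ) ≠ 0 := Nat.cast_ne_zero.mpr (Nat.one_le_iff_ne_zero.mp hd)
  rw [ContinuousLinearMap.comp_apply, hLG, hLM,
    maxwellianOfMoments_rest_eq_equilMaxwellian1 hm₁ hn₁]
  simp only [inner_add_right, inner_smul_right]
  field_simp
  ring

/-- For `d ≥ 1`, `m₁, m₂ > 0`, `n_{∞,1}, n_{∞,2} > 0` and parameters `α, δ, γ`,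
the interspecies Maxwellian `M₁₂` is differentiable at the origin for each fixed `v`,
with the stated partial derivatives. -/
theorem interMaxwellian12_hasFDerivAt_zero (d : ℕ) (hd : 1 ≤ d) (m₁ m₂ nInf1 nInf2 : ℝ)
    (hm₁ : 0 < m₁) (hm₂ : 0 < m₂) (hn₁ : 0 < nInf1) (hn₂ : 0 < nInf2) (α δ γ : ℝ)
    (v : EuclideanSpace ℝ (Fin d)) :
    ∃ L : (ℝ × ℝ × EuclideanSpace ℝ (Fin d) × EuclideanSpace ℝ (Fin d) × ℝ × ℝ) →L[ℝ] ℝ,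
      HasFDerivAt (fun p => interMaxwellian12 d m₁ m₂ nInf1 nInf2 α δ γ p v) L
        (0 : ℝ × ℝ × EuclideanSpace ℝ (Fin d) × EuclideanSpace ℝ (Fin d) × ℝ × ℝ) ∧
      ∀ (σ₁ σ₂ : ℝ) (μ₁ μ₂ : EuclideanSpace ℝ (Fin d)) (τ₁ τ₂ : ℝ),
        L (σ₁, σ₂, μ₁, μ₂, τ₁, τ₂) =
          equilMaxwellian1 d m₁ nInf1 v * (1 / nInf1) * (1 + (α / 2) * (d - m₁ * ‖v‖ ^ 2)) * σ₁
          + equilMaxwellian1 d m₁ nInf1 v * (1 / (2 * nInf2)) * (1 - α) * (d - m₁ * ‖v‖ ^ 2) * σ₂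
          + equilMaxwellian1 d m₁ nInf1 v * (δ * m₁ / nInf1) * (inner ℝ v μ₁ : ℝ)
          + equilMaxwellian1 d m₁ nInf1 v * ((1 - δ) * m₁ / nInf2) * (inner ℝ v μ₂ : ℝ)
          + equilMaxwellian1 d m₁ nInf1 v * (α / (2 * nInf1)) * (m₁ * ‖v‖ ^ 2 / d - 1) * τ₁
          + equilMaxwellian1 d m₁ nInf1 v * ((1 - α) / (2 * nInf2)) * (m₁ * ‖v‖ ^ 2 / d - 1) * τ₂ :=
  interMaxwellian12_hasFDerivAt_zero_general d hd m₁ m₂ nInf1 nInf2 hm₁ hn₁ hn₂ α δ γ v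
end

section
/- Let m₁, m₂, n₁, n₂ > 0, ν₁₁, ν₁₂, ν₂₂, ν₂₁ > 0 with ν₁₂ = ε ν₂₁ for some 0 < ε ≤ 1, and δ ≤ 1, α ≤ 1. Let a, b ∈ ℓ²(ℕ, ℂ) satisfy a₀ = b₀ = 0, √m₁ a₁ + √m₂ b₁ = 0, and a₂ + b₂ = 0. Define the quadratic form D(a,b) = (1/n₁)[ −2(ν₁₁ n₁ + ν₁₂ n₂) Σ_{j≥3} |a_j|² − 2 ν₁₂ n₂ (1−δ) |a₁|² − 2 ν₁₂ n₂ (1−α) |a₂|² + 2 ν₁₂ n₁ (1−δ) √(m₁/m₂) Re(conj(a₁) b₁) + 2 ν₁₂ n₁ (1−α) Re(b₂ conj(a₂)) ] + (1/n₂)[ −2(ν₂₂ n₂ + ν₂₁ n₁) Σ_{j≥3} |b_j|² − 2 ν₁₂ n₁ (m₁/m₂)(1−δ) |b₁|² − 2 ν₁₂ n₁ (1−α) |b₂|² + 2 ν₁₂ n₂ (1−δ) √(m₁/m₂) Re(conj(a₁) b₁) + 2 ν₁₂ n₂ (1−α) Re(b₂ conj(a₂)) ]. Set C = 2 min{ ν₁₂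 n₂ (1−δ), ν₁₂ n₂ (1−α), ν₁₁ n₁ + ν₁₂ n₂, ν₁₂ n₁ (m₁/m₂)(1−δ), ν₁₂ n₁ (1−α), ν₂₂ n₂ + ν₁₂ n₁ }. Then D(a,b) ≤ − C · ( (1/n₁) ‖a‖²_{ℓ²} + (1/n₂) ‖b‖²_{ℓ²} ). -/
/-!
The conservation laws force `b₁ = -√(m₁/m₂) a₁` and `b₂ = -a₂`, so both mixed terms
`Re(conj a₁ b₁)` and `Re(b₂ conj a₂)` are nonpositive and may be dropped. What remains is,
for each species, a sum of `-2 c_k x_k` over the nonnegative pieces `|a₁|², |a₂|², Σ_{j≥3} |a_j|²`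
of `‖a‖²` (and likewise for `b`), and every coefficient `c_k` is at least the minimum `C`;
for `ν₂₂ n₂ + ν₂₁ n₁` this uses `ν₁₂ = ε ν₂₁ ≤ ν₂₁`.
-/

open Finset

theorem lp.norm_sq_eq_tsum {α : Type*} {E : α → Type*} [∀ i, NormedAddCommGroup (E i)]
    (f : lp E 2) : ‖f‖ ^ 2 = ∑' i, ‖f i‖ ^ 2 := by
  simpa using lp.norm_rpow_eq_tsum (p := 2) (by norm_num) f

theorem lp.summable_norm_sq {α : Type*} {E : α → Type*} [∀ i, NormedAddCommGroup (E i)]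
    (f : lp E 2) : Summable fun i => ‖f i‖ ^ 2 := by
  simpa using (lp.memℓp f).summable (p := 2) (by norm_num)

theorem lp.norm_sq_eq_sum_range_add_tsum {E : ℕ → Type*} [∀ i, NormedAddCommGroup (E i)]
    (f : lp E 2) (k : ℕ) :
    ‖f‖ ^ 2 = ∑ i ∈ range k, ‖f i‖ ^ 2 + ∑' i, ‖f (i + k)‖ ^ 2 := by
  rw [lp.norm_sq_eq_tsum, (lp.summable_norm_sq f).sum_add_tsum_nat_add]

theorem lp.norm_sq_eq_of_apply_zero_eq_zero {E : ℕ → Type*} [∀ i, NormedAddCommGroup (E i)]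
    (f : lp E 2) (hf : f 0 = 0) :
    ‖f‖ ^ 2 = ‖f 1‖ ^ 2 + ‖f 2‖ ^ 2 + ∑' j, ‖f (j + 3)‖ ^ 2 := by
  simp [lp.norm_sq_eq_sum_range_add_tsum f 3, sum_range_succ, hf]

theorem Complex.re_conj_mul_nonpos_of_ofReal_mul_add_eq_zero {s t : ℝ} {z w : ℂ}
    (hs : 0 ≤ s) (ht : 0 < t) (h : (s : ℂ) * z + t * w = 0) :
    (starRingEnd ℂ z * w).re ≤ 0 := by
  have hmul : starRingEnd ℂ z * w * t = ((-(s * normSq z) : ℝ) : ℂ) := by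
    push_cast
    rw [normSq_eq_conj_mul_self]
    linear_combination starRingEnd ℂ z * h
  have hre : (starRingEnd ℂ z * w).re * t = -(s * normSq z) := by
    rw [← re_mul_ofReal, hmul, ofReal_re]
  exact nonpos_of_mul_nonpos_left (hre ▸ neg_nonpos.2 (mul_nonneg hs (normSq_nonneg z))) ht

theorem neg_two_mul_add_le_of_le {C K c₁ c₂ S x₁ x₂ : ℝ} (hK : C ≤ K) (hc₁ : C ≤ c₁)
    (hc₂ : C ≤ c₂) (hS : 0 ≤ S) (hx₁ : 0 ≤ x₁) (hx₂ : 0 ≤ x₂) :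
    -2 * K * S - 2 * c₁ * x₁ - 2 * c₂ * x₂ ≤ -(2 * C) * (x₁ + x₂ + S) := by
  nlinarith [mul_le_mul_of_nonneg_right hK hS, mul_le_mul_of_nonneg_right hc₁ hx₁,
    mul_le_mul_of_nonneg_right hc₂ hx₂]

theorem zero_mode_dissipation_estimate_general (m₁ m₂ n₁ n₂ ν₁₁ ν₁₂ ν₂₂ ν₂₁ ε δ α : ℝ)
    (hm₂ : 0 < m₂) (hn₁ : 0 < n₁) (hn₂ : 0 < n₂)
    (hν₁₂ : 0 < ν₁₂) (hν₂₁ : 0 < ν₂₁)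
    (hcoll : ν₁₂ = ε * ν₂₁) (hε1 : ε ≤ 1) (hδ : δ ≤ 1) (hα : α ≤ 1)
    (a b : lp (fun _ : ℕ => ℂ) 2)
    (ha0 : a 0 = 0) (hb0 : b 0 = 0)
    (hmom : (Real.sqrt m₁ : ℂ) * a 1 + (Real.sqrt m₂ : ℂ) * b 1 = 0)
    (hen : a 2 + b 2 = 0) :
    (1 / n₁) *
        (-2 * (ν₁₁ * n₁ + ν₁₂ * n₂) * (∑' j : ℕ, ‖a (j + 3)‖ ^ 2)
          - 2 * ν₁₂ * n₂ * (1 - δ) * ‖a 1‖ ^ 2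
          - 2 * ν₁₂ * n₂ * (1 - α) * ‖a 2‖ ^ 2
          + 2 * ν₁₂ * n₁ * (1 - δ) * Real.sqrt (m₁ / m₂) * ((starRingEnd ℂ) (a 1) * b 1).re
          + 2 * ν₁₂ * n₁ * (1 - α) * (b 2 * (starRingEnd ℂ) (a 2)).re)
      + (1 / n₂) *
        (-2 * (ν₂₂ * n₂ + ν₂₁ * n₁) * (∑' j : ℕ, ‖b (j + 3)‖ ^ 2)
          - 2 * ν₁₂ * n₁ * (m₁ / m₂) * (1 - δ) * ‖b 1‖ ^ 2
          - 2 * ν₁₂ * n₁ * (1 - α) * ‖b 2‖ ^ 2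
          + 2 * ν₁₂ * n₂ * (1 - δ) * Real.sqrt (m₁ / m₂) * ((starRingEnd ℂ) (a 1) * b 1).re
          + 2 * ν₁₂ * n₂ * (1 - α) * (b 2 * (starRingEnd ℂ) (a 2)).re)
      ≤ -(2 * min (ν₁₂ * n₂ * (1 - δ))
            (min (ν₁₂ * n₂ * (1 - α))
              (min (ν₁₁ * n₁ + ν₁₂ * n₂)
                (min (ν₁₂ * n₁ * (m₁ / m₂) * (1 - δ))
                  (min (ν₁₂ * n₁ * (1 - α)) (ν₂₂ * n₂ + ν₁₂ * n₁)))))) *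
          ((1 / n₁) * ‖a‖ ^ 2 + (1 / n₂) * ‖b‖ ^ 2) := by
  have hδ' : 0 ≤ 1 - δ := sub_nonneg.2 hδ
  have hα' : 0 ≤ 1 - α := sub_nonneg.2 hα
  have hmix₁ : ((starRingEnd ℂ) (a 1) * b 1).re ≤ 0 :=
    Complex.re_conj_mul_nonpos_of_ofReal_mul_add_eq_zero (Real.sqrt_nonneg m₁)
      (Real.sqrt_pos.2 hm₂) hmom
  have hmix₂ : (b 2 * (starRingEnd ℂ) (a 2)).re ≤ 0 := mul_comm (b 2) _ ▸
    Complex.re_conj_mul_nonpos_of_ofReal_mul_add_eq_zero zero_le_one one_pos (by simpa using hen)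
  have hmix (n : ℝ) (hn : 0 < n) :
      2 * ν₁₂ * n * (1 - δ) * Real.sqrt (m₁ / m₂) * ((starRingEnd ℂ) (a 1) * b 1).re
        + 2 * ν₁₂ * n * (1 - α) * (b 2 * (starRingEnd ℂ) (a 2)).re ≤ 0 :=
    add_nonpos (mul_nonpos_of_nonneg_of_nonpos (by positivity) hmix₁)
      (mul_nonpos_of_nonneg_of_nonpos (by positivity) hmix₂)
  set C := min (ν₁₂ * n₂ * (1 - δ)) (min (ν₁₂ * n₂ * (1 - α)) (min (ν₁₁ * n₁ + ν₁₂ * n₂)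
    (min (ν₁₂ * n₁ * (m₁ / m₂) * (1 - δ)) (min (ν₁₂ * n₁ * (1 - α)) (ν₂₂ * n₂ + ν₁₂ * n₁)))))
  have hν : ν₁₂ ≤ ν₂₁ := hcoll ▸ mul_le_of_le_one_left hν₂₁.le hε1
  have hA := neg_two_mul_add_le_of_le (show C ≤ ν₁₁ * n₁ + ν₁₂ * n₂ by simp [C])
    (show C ≤ ν₁₂ * n₂ * (1 - δ) by simp [C]) (show C ≤ ν₁₂ * n₂ * (1 - α) by simp [C])
    (by positivity : 0 ≤ ∑' j, ‖a (j + 3)‖ ^ 2) (sq_nonneg ‖a 1‖) (sq_nonneg ‖a 2‖)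
  have hB := neg_two_mul_add_le_of_le
    ((show C ≤ ν₂₂ * n₂ + ν₁₂ * n₁ by simp [C]).trans (by gcongr : _ ≤ ν₂₂ * n₂ + ν₂₁ * n₁))
    (show C ≤ ν₁₂ * n₁ * (m₁ / m₂) * (1 - δ) by simp [C])
    (show C ≤ ν₁₂ * n₁ * (1 - α) by simp [C])
    (by positivity : 0 ≤ ∑' j, ‖b (j + 3)‖ ^ 2) (sq_nonneg ‖b 1‖) (sq_nonneg ‖b 2‖)
  calc _ ≤ 1 / n₁ * (-(2 * C) * ‖a‖ ^ 2) + 1 / n₂ * (-(2 * C) * ‖b‖ ^ 2) := by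
        gcongr 1 / n₁ * ?_ + 1 / n₂ * ?_
        · rw [lp.norm_sq_eq_of_apply_zero_eq_zero a ha0]; linarith [hmix n₁ hn₁]
        · rw [lp.norm_sq_eq_of_apply_zero_eq_zero b hb0]; linarith [hmix n₂ hn₂]
    _ = _ := by ring

/-- The zero-mode entropy dissipation estimate for the linearized two-species BGK system:
under the conservation constraints `a₀ = b₀ = 0`, `√m₁ a₁ + √m₂ b₁ = 0`, `a₂ + b₂ = 0`,
the weighted dissipation quadratic form `D(a,b)` is bounded above by
`−C((1/n₁)‖a‖² + (1/n₂)‖b‖²)` with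
`C = 2 min{ν₁₂n₂(1−δ), ν₁₂n₂(1−α), ν₁₁n₁+ν₁₂n₂, ν₁₂n₁(m₁/m₂)(1−δ), ν₁₂n₁(1−α), ν₂₂n₂+ν₁₂n₁}`. -/
theorem zero_mode_dissipation_estimate (m₁ m₂ n₁ n₂ ν₁₁ ν₁₂ ν₂₂ ν₂₁ ε δ α : ℝ)
    (hm₁ : 0 < m₁) (hm₂ : 0 < m₂) (hn₁ : 0 < n₁) (hn₂ : 0 < n₂)
    (hν₁₁ : 0 < ν₁₁) (hν₁₂ : 0 < ν₁₂) (hν₂₂ : 0 < ν₂₂) (hν₂₁ : 0 < ν₂₁)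
    (hcoll : ν₁₂ = ε * ν₂₁) (hε0 : 0 < ε) (hε1 : ε ≤ 1) (hδ : δ ≤ 1) (hα : α ≤ 1)
    (a b : lp (fun _ : ℕ => ℂ) 2)
    (ha0 : a 0 = 0) (hb0 : b 0 = 0)
    (hmom : (Real.sqrt m₁ : ℂ) * a 1 + (Real.sqrt m₂ : ℂ) * b 1 = 0)
    (hen : a 2 + b 2 = 0) :
    (1 / n₁) *
        (-2 * (ν₁₁ * n₁ + ν₁₂ * n₂) * (∑' j : ℕ, ‖a (j + 3)‖ ^ 2)
          - 2 * ν₁₂ * n₂ * (1 - δ) * ‖a 1‖ ^ 2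
          - 2 * ν₁₂ * n₂ * (1 - α) * ‖a 2‖ ^ 2
          + 2 * ν₁₂ * n₁ * (1 - δ) * Real.sqrt (m₁ / m₂) * ((starRingEnd ℂ) (a 1) * b 1).re
          + 2 * ν₁₂ * n₁ * (1 - α) * (b 2 * (starRingEnd ℂ) (a 2)).re)
      + (1 / n₂) *
        (-2 * (ν₂₂ * n₂ + ν₂₁ * n₁) * (∑' j : ℕ, ‖b (j + 3)‖ ^ 2)
          - 2 * ν₁₂ * n₁ * (m₁ / m₂) * (1 - δ) * ‖b 1‖ ^ 2
          - 2 * ν₁₂ * n₁ * (1 - α) * ‖b 2‖ ^ 2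
          + 2 * ν₁₂ * n₂ * (1 - δ) * Real.sqrt (m₁ / m₂) * ((starRingEnd ℂ) (a 1) * b 1).re
          + 2 * ν₁₂ * n₂ * (1 - α) * (b 2 * (starRingEnd ℂ) (a 2)).re)
      ≤ -(2 * min (ν₁₂ * n₂ * (1 - δ))
            (min (ν₁₂ * n₂ * (1 - α))
              (min (ν₁₁ * n₁ + ν₁₂ * n₂)
                (min (ν₁₂ * n₁ * (m₁ / m₂) * (1 - δ))
                  (min (ν₁₂ * n₁ * (1 - α)) (ν₂₂ * n₂ + ν₁₂ * n₁)))))) *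
          ((1 / n₁) * ‖a‖ ^ 2 + (1 / n₂) * ‖b‖ ^ 2) :=
  zero_mode_dissipation_estimate_general m₁ m₂ n₁ n₂ ν₁₁ ν₁₂ ν₂₂ ν₂₁ ε δ α hm₂ hn₁ hn₂ hν₁₂ hν₂₁
    hcoll hε1 hδ hα a b ha0 hb0 hmom hen
end

section
/- Let m₁, m₂, n₁, n₂ > 0, ν₁₁, ν₁₂, ν₂₂, ν₂₁ > 0 with ν₁₂ = ε ν₂₁ for some 0 < ε ≤ 1, and δ ≤ 1, α ≤ 1. Define the diagonal operators on ℓ²(ℕ, ℂ): L₁₂ = L₂₂ = diag(0,0,0,1,1,…), L₁₃ = diag(0, 1−δ, 1−α, 1, 1, …), L₁₄ = diag(0, (1−δ)(n₁/n₂)√(m₁/m₂), (1−α)(n₁/n₂), 0, 0, …), L₂₃ = diag(0, (m₁/m₂) ε (1−δ), ε(1−α), 1, 1, …), L₂₄ = diag(0, (n₂/n₁)√(m₁/m₂) ε (1−δ), (n₂/n₁) ε (1−α), 0, 0, …). Suppose a, b : [0, ∞) → ℓ²(ℕ, ℂ) are differentiable and solve the zero-mode system a'(t) = − ν₁₁ n₁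 L₁₂ a(t) − ν₁₂ n₂ L₁₃ a(t) + ν₁₂ n₂ L₁₄ b(t) and b'(t) = − ν₂₂ n₂ L₂₂ b(t) − ν₂₁ n₁ L₂₃ b(t) + ν₂₁ n₁ L₂₄ a(t), with initial data satisfying a₀(0) = b₀(0) = 0, √m₁ a₁(0) + √m₂ b₁(0) = 0, and a₂(0) + b₂(0) = 0. Set C = 2 min{ ν₁₂ n₂ (1−δ), ν₁₂ n₂ (1−α), ν₁₁ n₁ + ν₁₂ n₂, ν₁₂ n₁ (m₁/m₂)(1−δ), ν₁₂ n₁ (1−α), ν₂₂ n₂ + ν₁₂ n₁ }. Then for all t ≥ 0: (1/n₁) ‖a(t)‖²_{ℓ²} + (1/n₂) ‖b(t)‖²_{ℓ²} ≤ e^{−C t} · ( (1/n₁) ‖a(0)‖²_{ℓ²} + (1/n₂) ‖b(0)‖²_{ℓ²} ). -/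
/-- Diagonal entries of the operator `L₁₂ = L₂₂ = diag(0,0,0,1,1,…)`. -/
noncomputable def bgkDiagL12 (j : ℕ) : ℝ := if 3 ≤ j then 1 else 0

/-- Diagonal entries of `L₁₃ = diag(0, 1−δ, 1−α, 1, 1, …)`. -/
def bgkDiagL13 (δ α : ℝ) : ℕ → ℝ
  | 0 => 0
  | 1 => 1 - δ
  | 2 => 1 - α
  | _ => 1

/-- Diagonal entries of `L₁₄ = diag(0, (1−δ)(n₁/n₂)√(m₁/m₂), (1−α)(n₁/n₂), 0, 0, …)`. -/
noncomputable def bgkDiagL14 (m₁ m₂ n₁ n₂ δ α : ℝ) : ℕ → ℝ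
  | 0 => 0
  | 1 => (1 - δ) * (n₁ / n₂) * Real.sqrt (m₁ / m₂)
  | 2 => (1 - α) * (n₁ / n₂)
  | _ => 0

/-- Diagonal entries of `L₂₃ = diag(0, (m₁/m₂)ε(1−δ), ε(1−α), 1, 1, …)`. -/
noncomputable def bgkDiagL23 (m₁ m₂ ε δ α : ℝ) : ℕ → ℝ
  | 0 => 0
  | 1 => (m₁ / m₂) * ε * (1 - δ)
  | 2 => ε * (1 - α)
  | _ => 1

/-- Diagonal entries of `L₂₄ = diag(0, (n₂/n₁)√(m₁/m₂)ε(1−δ), (n₂/n₁)ε(1−α), 0, 0, …)`. -/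
noncomputable def bgkDiagL24 (m₁ m₂ n₁ n₂ ε δ α : ℝ) : ℕ → ℝ
  | 0 => 0
  | 1 => (n₂ / n₁) * Real.sqrt (m₁ / m₂) * ε * (1 - δ)
  | 2 => (n₂ / n₁) * ε * (1 - α)
  | _ => 0


/-! In every Hermite coordinate `j` the zero-mode system is a linear ODE for the pair `(a_j, b_j)`.
For `j = 0` both coordinates are constant, hence zero. For `j = 1` and `j = 2` the pair only
exchanges momentum, resp. energy: `√(m₁/m₂) a_j + b_j`, resp. `a_j + b_j`, is conserved and so
stays zero, which turns the equation for each coordinate into a scalar relaxation `u' = -μ u`. For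
`j ≥ 3` the coordinates are decoupled from the start, and `b_j` relaxes at rate
`ν₂₂n₂ + ν₂₁n₁ ≥ ν₂₂n₂ + ν₁₂n₁` because `ν₁₂ = εν₂₁ ≤ ν₂₁`. Every rate `μ` is thus at least the
minimum `c` in the statement, so each coordinate of `a(t)` and of `b(t)` is bounded by `e^{-ct}`
times its initial value, and hence so are `‖a(t)‖` and `‖b(t)‖`. -/

open Real

section LinearODE

variable {E : Type*} [NormedAddCommGroup E] [NormedSpace ℝ E]

theorem eq_apply_zero_of_hasDerivAt_zero {u : ℝ → E} (hu : ∀ t, 0 ≤ t → HasDerivAt u 0 t)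
    {t : ℝ} (ht : 0 ≤ t) : u t = u 0 :=
  constant_of_has_deriv_right_zero (fun x hx => (hu x hx.1).continuousAt.continuousWithinAt)
    (fun x hx => (hu x hx.1).hasDerivWithinAt) t ⟨ht, le_rfl⟩

theorem eq_exp_smul_of_hasDerivAt {u : ℝ → E} {μ : ℝ}
    (hu : ∀ t, 0 ≤ t → HasDerivAt u (μ • u t) t) {t : ℝ} (ht : 0 ≤ t) :
    u t = exp (μ * t) • u 0 := by
  have hv : ∀ s, 0 ≤ s → HasDerivAt (fun s => exp (-μ * s) • u s) 0 s := by
    intro s hs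
    convert (((hasDerivAt_id s).const_mul (-μ)).exp).fun_smul (hu s hs) using 1
    simp only [id]
    module
  have h := eq_apply_zero_of_hasDerivAt_zero hv ht
  simp only [mul_zero, exp_zero, one_smul] at h
  rw [← h, smul_smul, ← exp_add]
  simp

theorem norm_exp_smul_le {μ C t : ℝ} (hC : C ≤ μ) (ht : 0 ≤ t) (v : E) :
    ‖exp (-μ * t) • v‖ ≤ exp (-C * t) * ‖v‖ := by
  rw [norm_smul, norm_of_nonneg (exp_pos _).le]
  gcongr

theorem norm_le_exp_mul_norm_of_hasDerivAt {u : ℝ → E} {μ C t : ℝ}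
    (hu : ∀ t, 0 ≤ t → HasDerivAt u ((-μ) • u t) t) (hC : C ≤ μ) (ht : 0 ≤ t) :
    ‖u t‖ ≤ exp (-C * t) * ‖u 0‖ := by
  rw [eq_exp_smul_of_hasDerivAt hu ht]
  exact norm_exp_smul_le hC ht _

/-- `hη` and `hγ` make `s • x + y` a conserved quantity; once it vanishes, `y = -(s • x)` and `x`
solves `x' = -(α + s * β) • x`. -/
theorem norm_le_exp_mul_norm_of_exchange {x y : ℝ → E} {α β γ η s C t : ℝ}
    (hx : ∀ t, 0 ≤ t → HasDerivAt x ((-α) • x t + β • y t) t)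
    (hy : ∀ t, 0 ≤ t → HasDerivAt y ((-γ) • y t + η • x t) t)
    (hη : η = s * α) (hγ : γ = s * β) (h0 : s • x 0 + y 0 = 0) (hC : C ≤ α + s * β)
    (ht : 0 ≤ t) :
    ‖x t‖ ≤ exp (-C * t) * ‖x 0‖ ∧ ‖y t‖ ≤ exp (-C * t) * ‖y 0‖ := by
  have hw : ∀ t, 0 ≤ t → HasDerivAt (fun t => s • x t + y t) 0 t := by
    intro t ht
    convert ((hx t ht).fun_const_smul s).fun_add (hy t ht) using 1
    subst hη hγ
    module
  have hyx : ∀ t, 0 ≤ t → y t = -(s • x t) := fun t ht =>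
    eq_neg_of_add_eq_zero_right ((eq_apply_zero_of_hasDerivAt_zero hw ht).trans h0)
  have hx' : ∀ t, 0 ≤ t → HasDerivAt x ((-(α + s * β)) • x t) t := by
    intro t ht
    convert hx t ht using 1
    rw [hyx t ht]
    module
  have hxt := norm_le_exp_mul_norm_of_hasDerivAt hx' hC ht
  refine ⟨hxt, ?_⟩
  rw [hyx t ht, hyx 0 le_rfl, norm_neg, norm_neg, norm_smul, norm_smul]
  calc ‖s‖ * ‖x t‖ ≤ ‖s‖ * (exp (-C * t) * ‖x 0‖) := by gcongr
    _ = exp (-C * t) * (‖s‖ * ‖x 0‖) := by ring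

end LinearODE

theorem lp.norm_le_mul_norm_of_forall_norm_apply_le {ι : Type*} {E : ι → Type*}
    [∀ i, NormedAddCommGroup (E i)] [∀ i, NormedSpace ℝ (E i)] {p : ENNReal} [Fact (1 ≤ p)]
    {f g : lp E p} {c : ℝ} (hc : 0 ≤ c) (h : ∀ i, ‖f i‖ ≤ c * ‖g i‖) : ‖f‖ ≤ c * ‖g‖ := by
  have hp : p ≠ 0 := (zero_lt_one.trans_le Fact.out).ne'
  calc ‖f‖ ≤ ‖c • g‖ := lp.norm_mono hp fun i => by
        rw [lp.coeFn_smul, Pi.smul_apply, norm_smul, norm_of_nonneg hc]; exact h i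
    _ = c * ‖g‖ := by rw [norm_smul, norm_of_nonneg hc]

theorem HasDerivAt.lp_apply {ι : Type*} {E : ι → Type*} [∀ i, NormedAddCommGroup (E i)]
    [∀ i, NormedSpace ℝ (E i)] {p : ENNReal} [Fact (1 ≤ p)] {a : ℝ → lp E p} {a' : lp E p}
    {t : ℝ} (h : HasDerivAt a a' t) (i : ι) : HasDerivAt (fun u => a u i) (a' i) t :=
  (lp.evalCLM ℝ E p i).hasFDerivAt.comp_hasDerivAt t h

theorem hasDerivAt_lp_apply_of_diagonal_system {ι : Type*} {p : ENNReal} [Fact (1 ≤ p)]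
    {a b a' : ℝ → lp (fun _ : ι => ℂ) p} {A B D : ι → ℝ}
    (hda : ∀ t, 0 ≤ t → HasDerivAt a (a' t) t)
    (heqa : ∀ t, 0 ≤ t → ∀ j,
      a' t j = -(A j : ℂ) * a t j - (B j : ℂ) * a t j + (D j : ℂ) * b t j)
    (j : ι) (t : ℝ) (ht : 0 ≤ t) :
    HasDerivAt (fun u => a u j) ((-(A j + B j)) • a t j + D j • b t j) t := by
  refine ((hda t ht).lp_apply j).congr_deriv ?_
  rw [heqa t ht j, Complex.real_smul, Complex.real_smul]
  push_cast
  ring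

theorem bgk_momentum_exchange_balance {m₁ m₂ n₁ n₂ ν₁₁ ν₁₂ ν₂₂ ν₂₁ ε δ α : ℝ}
    (hm : 0 ≤ m₁ / m₂) (hn₁ : n₁ ≠ 0) (hn₂ : n₂ ≠ 0) (hcoll : ν₁₂ = ε * ν₂₁) :
    ν₂₁ * n₁ * bgkDiagL24 m₁ m₂ n₁ n₂ ε δ α 1 =
        √(m₁ / m₂) * (ν₁₁ * n₁ * bgkDiagL12 1 + ν₁₂ * n₂ * bgkDiagL13 δ α 1) ∧
      ν₂₂ * n₂ * bgkDiagL12 1 + ν₂₁ * n₁ * bgkDiagL23 m₁ m₂ ε δ α 1 =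
        √(m₁ / m₂) * (ν₁₂ * n₂ * bgkDiagL14 m₁ m₂ n₁ n₂ δ α 1) := by
  simp only [bgkDiagL12, bgkDiagL13, bgkDiagL14, bgkDiagL23, bgkDiagL24, hcoll]
  norm_num
  constructor
  · field_simp
  · field_simp
    rw [sq_sqrt hm]
    ring

theorem bgk_energy_exchange_balance {m₁ m₂ n₁ n₂ ν₁₁ ν₁₂ ν₂₂ ν₂₁ ε δ α : ℝ}
    (hn₁ : n₁ ≠ 0) (hn₂ : n₂ ≠ 0) (hcoll : ν₁₂ = ε * ν₂₁) :
    ν₂₁ * n₁ * bgkDiagL24 m₁ m₂ n₁ n₂ ε δ α 2 =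
        ν₁₁ * n₁ * bgkDiagL12 2 + ν₁₂ * n₂ * bgkDiagL13 δ α 2 ∧
      ν₂₂ * n₂ * bgkDiagL12 2 + ν₂₁ * n₁ * bgkDiagL23 m₁ m₂ ε δ α 2 =
        ν₁₂ * n₂ * bgkDiagL14 m₁ m₂ n₁ n₂ δ α 2 := by
  simp only [bgkDiagL12, bgkDiagL13, bgkDiagL14, bgkDiagL23, bgkDiagL24, hcoll]
  norm_num
  constructor <;> field_simp

theorem zero_mode_coord_decay {E : Type*} [NormedAddCommGroup E] [NormedSpace ℝ E]
    {m₁ m₂ n₁ n₂ ν₁₁ ν₁₂ ν₂₂ ν₂₁ ε δ α C t : ℝ}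
    (hm₁ : 0 ≤ m₁) (hm₂ : 0 < m₂) (hn₁ : 0 < n₁) (hn₂ : 0 < n₂)
    (hν₁₂ : 0 ≤ ν₁₂) (hν₂₁ : 0 ≤ ν₂₁) (hcoll : ν₁₂ = ε * ν₂₁) (hε1 : ε ≤ 1) (hδ : δ ≤ 1)
    (hα : α ≤ 1) (hCδ : C ≤ ν₁₂ * n₂ * (1 - δ)) (hCα : C ≤ ν₁₂ * n₂ * (1 - α))
    (hC₁ : C ≤ ν₁₁ * n₁ + ν₁₂ * n₂) (hC₂ : C ≤ ν₂₂ * n₂ + ν₁₂ * n₁) {x y : ℕ → ℝ → E}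
    (hx : ∀ j t, 0 ≤ t → HasDerivAt (x j)
      ((-(ν₁₁ * n₁ * bgkDiagL12 j + ν₁₂ * n₂ * bgkDiagL13 δ α j)) • x j t
        + (ν₁₂ * n₂ * bgkDiagL14 m₁ m₂ n₁ n₂ δ α j) • y j t) t)
    (hy : ∀ j t, 0 ≤ t → HasDerivAt (y j)
      ((-(ν₂₂ * n₂ * bgkDiagL12 j + ν₂₁ * n₁ * bgkDiagL23 m₁ m₂ ε δ α j)) • y j t
        + (ν₂₁ * n₁ * bgkDiagL24 m₁ m₂ n₁ n₂ ε δ α j) • x j t) t)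
    (hx0 : x 0 0 = 0) (hy0 : y 0 0 = 0) (hmom : √m₁ • x 1 0 + √m₂ • y 1 0 = 0)
    (hen : x 2 0 + y 2 0 = 0) (j : ℕ) (ht : 0 ≤ t) :
    ‖x j t‖ ≤ exp (-C * t) * ‖x j 0‖ ∧ ‖y j t‖ ≤ exp (-C * t) * ‖y j 0‖ := by
  rcases j with _ | _ | _ | k
  · have hx' : ∀ t, 0 ≤ t → HasDerivAt (x 0) 0 t := fun t ht => by
      simpa [bgkDiagL12, bgkDiagL13, bgkDiagL14] using hx 0 t ht
    have hy' : ∀ t, 0 ≤ t → HasDerivAt (y 0) 0 t := fun t ht => by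
      simpa [bgkDiagL12, bgkDiagL23, bgkDiagL24] using hy 0 t ht
    simp [eq_apply_zero_of_hasDerivAt_zero hx' ht, eq_apply_zero_of_hasDerivAt_zero hy' ht,
      hx0, hy0]
  · obtain ⟨hη, hγ⟩ := bgk_momentum_exchange_balance (ν₁₁ := ν₁₁) (ν₂₂ := ν₂₂)
      (div_nonneg hm₁ hm₂.le) hn₁.ne' hn₂.ne' hcoll
    refine norm_le_exp_mul_norm_of_exchange (hx 1) (hy 1) hη hγ ?_ ?_ ht
    · have hsqrt : √m₂ ≠ 0 := (sqrt_pos.mpr hm₂).ne'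
      calc √(m₁ / m₂) • x 1 0 + y 1 0 = (√m₂)⁻¹ • (√m₁ • x 1 0 + √m₂ • y 1 0) := by
            rw [smul_add, smul_smul, smul_smul, inv_mul_cancel₀ hsqrt, one_smul,
              sqrt_div' _ hm₂.le, div_eq_inv_mul]
        _ = 0 := by rw [hmom, smul_zero]
    · have h1δ := sub_nonneg.mpr hδ
      have : 0 ≤ √(m₁ / m₂) * (ν₁₂ * n₂ * ((1 - δ) * (n₁ / n₂) * √(m₁ / m₂))) := by positivity
      simpa [bgkDiagL12, bgkDiagL13, bgkDiagL14] using add_le_add hCδ this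
  · obtain ⟨hη, hγ⟩ := bgk_energy_exchange_balance (m₁ := m₁) (m₂ := m₂) (ν₁₁ := ν₁₁)
      (ν₂₂ := ν₂₂) hn₁.ne' hn₂.ne' hcoll
    refine norm_le_exp_mul_norm_of_exchange (s := 1) (hx 2) (hy 2) (hη.trans (one_mul _).symm)
      (hγ.trans (one_mul _).symm) (by simpa using hen) ?_ ht
    have h1α := sub_nonneg.mpr hα
    have : 0 ≤ ν₁₂ * n₂ * ((1 - α) * (n₁ / n₂)) := by positivity
    simpa [bgkDiagL12, bgkDiagL13, bgkDiagL14] using add_le_add hCα this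
  · have hν : ν₁₂ * n₁ ≤ ν₂₁ * n₁ := by
      rw [hcoll]
      exact mul_le_mul_of_nonneg_right (mul_le_of_le_one_left hν₂₁ hε1) hn₁.le
    constructor
    · refine norm_le_exp_mul_norm_of_hasDerivAt (fun t ht => ?_) hC₁ ht
      simpa [bgkDiagL12, bgkDiagL13, bgkDiagL14] using hx (k + 3) t ht
    · refine norm_le_exp_mul_norm_of_hasDerivAt (fun t ht => ?_)
        (hC₂.trans (add_le_add_right hν _)) ht
      simpa [bgkDiagL12, bgkDiagL23, bgkDiagL24] using hy (k + 3) t ht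

theorem zero_mode_exponential_decay_general (m₁ m₂ n₁ n₂ ν₁₁ ν₁₂ ν₂₂ ν₂₁ ε δ α : ℝ)
    (hm₁ : 0 < m₁) (hm₂ : 0 < m₂) (hn₁ : 0 < n₁) (hn₂ : 0 < n₂)
    (hν₁₂ : 0 < ν₁₂) (hν₂₁ : 0 < ν₂₁)
    (hcoll : ν₁₂ = ε * ν₂₁) (hε1 : ε ≤ 1) (hδ : δ ≤ 1) (hα : α ≤ 1)
    (a b a' b' : ℝ → lp (fun _ : ℕ => ℂ) 2)
    (hda : ∀ t : ℝ, 0 ≤ t → HasDerivAt a (a' t) t)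
    (hdb : ∀ t : ℝ, 0 ≤ t → HasDerivAt b (b' t) t)
    (heqa : ∀ t : ℝ, 0 ≤ t → ∀ j : ℕ,
      a' t j = -(ν₁₁ * n₁ * bgkDiagL12 j : ℝ) * a t j
        - (ν₁₂ * n₂ * bgkDiagL13 δ α j : ℝ) * a t j
        + (ν₁₂ * n₂ * bgkDiagL14 m₁ m₂ n₁ n₂ δ α j : ℝ) * b t j)
    (heqb : ∀ t : ℝ, 0 ≤ t → ∀ j : ℕ,
      b' t j = -(ν₂₂ * n₂ * bgkDiagL12 j : ℝ) * b t j
        - (ν₂₁ * n₁ * bgkDiagL23 m₁ m₂ ε δ α j : ℝ) * b t j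
        + (ν₂₁ * n₁ * bgkDiagL24 m₁ m₂ n₁ n₂ ε δ α j : ℝ) * a t j)
    (ha0 : a 0 0 = 0) (hb0 : b 0 0 = 0)
    (hmom : (Real.sqrt m₁ : ℂ) * a 0 1 + (Real.sqrt m₂ : ℂ) * b 0 1 = 0)
    (hen : a 0 2 + b 0 2 = 0) :
    ∀ t : ℝ, 0 ≤ t →
      (1 / n₁) * ‖a t‖ ^ 2 + (1 / n₂) * ‖b t‖ ^ 2 ≤
        Real.exp (-(2 * min (ν₁₂ * n₂ * (1 - δ))
            (min (ν₁₂ * n₂ * (1 - α))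
              (min (ν₁₁ * n₁ + ν₁₂ * n₂)
                (min (ν₁₂ * n₁ * (m₁ / m₂) * (1 - δ))
                  (min (ν₁₂ * n₁ * (1 - α)) (ν₂₂ * n₂ + ν₁₂ * n₁)))))) * t) *
          ((1 / n₁) * ‖a 0‖ ^ 2 + (1 / n₂) * ‖b 0‖ ^ 2) := by
  intro t ht
  set C := min (ν₁₂ * n₂ * (1 - δ)) (min (ν₁₂ * n₂ * (1 - α)) (min (ν₁₁ * n₁ + ν₁₂ * n₂)
    (min (ν₁₂ * n₁ * (m₁ / m₂) * (1 - δ)) (min (ν₁₂ * n₁ * (1 - α)) (ν₂₂ * n₂ + ν₁₂ * n₁)))))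
  have hcoord := fun j => zero_mode_coord_decay (C := C) hm₁.le hm₂ hn₁ hn₂ hν₁₂.le hν₂₁.le
    hcoll hε1 hδ hα (by simp [C]) (by simp [C]) (by simp [C]) (by simp [C])
    (hasDerivAt_lp_apply_of_diagonal_system hda heqa)
    (hasDerivAt_lp_apply_of_diagonal_system hdb heqb) ha0 hb0
    (by simpa only [Complex.real_smul] using hmom) hen j ht
  have ha := lp.norm_le_mul_norm_of_forall_norm_apply_le (exp_pos _).le fun j => (hcoord j).1
  have hb := lp.norm_le_mul_norm_of_forall_norm_apply_le (exp_pos _).le fun j => (hcoord j).2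
  have hexp : exp (-(2 * C) * t) = exp (-C * t) ^ 2 := by rw [sq, ← exp_add]; ring_nf
  calc (1 / n₁) * ‖a t‖ ^ 2 + (1 / n₂) * ‖b t‖ ^ 2
      ≤ (1 / n₁) * (exp (-C * t) * ‖a 0‖) ^ 2 + (1 / n₂) * (exp (-C * t) * ‖b 0‖) ^ 2 := by
        gcongr
    _ = exp (-(2 * C) * t) * ((1 / n₁) * ‖a 0‖ ^ 2 + (1 / n₂) * ‖b 0‖ ^ 2) := by
        rw [hexp]; ring

/-- Exponential decay of the spatially homogeneous (k = 0) Fourier mode of the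
linearized two-species BGK system: if `a, b : [0,∞) → ℓ²(ℕ,ℂ)` solve the zero-mode
system with the conservation constraints at `t = 0`, then for all `t ≥ 0`,
`(1/n₁)‖a(t)‖² + (1/n₂)‖b(t)‖² ≤ e^{−Ct}((1/n₁)‖a(0)‖² + (1/n₂)‖b(0)‖²)` with
`C = 2 min{ν₁₂n₂(1−δ), ν₁₂n₂(1−α), ν₁₁n₁+ν₁₂n₂, ν₁₂n₁(m₁/m₂)(1−δ), ν₁₂n₁(1−α), ν₂₂n₂+ν₁₂n₁}`. -/
theorem zero_mode_exponential_decay (m₁ m₂ n₁ n₂ ν₁₁ ν₁₂ ν₂₂ ν₂₁ ε δ α : ℝ)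
    (hm₁ : 0 < m₁) (hm₂ : 0 < m₂) (hn₁ : 0 < n₁) (hn₂ : 0 < n₂)
    (hν₁₁ : 0 < ν₁₁) (hν₁₂ : 0 < ν₁₂) (hν₂₂ : 0 < ν₂₂) (hν₂₁ : 0 < ν₂₁)
    (hcoll : ν₁₂ = ε * ν₂₁) (hε0 : 0 < ε) (hε1 : ε ≤ 1) (hδ : δ ≤ 1) (hα : α ≤ 1)
    (a b a' b' : ℝ → lp (fun _ : ℕ => ℂ) 2)
    (hda : ∀ t : ℝ, 0 ≤ t → HasDerivAt a (a' t) t)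
    (hdb : ∀ t : ℝ, 0 ≤ t → HasDerivAt b (b' t) t)
    (heqa : ∀ t : ℝ, 0 ≤ t → ∀ j : ℕ,
      a' t j = -(ν₁₁ * n₁ * bgkDiagL12 j : ℝ) * a t j
        - (ν₁₂ * n₂ * bgkDiagL13 δ α j : ℝ) * a t j
        + (ν₁₂ * n₂ * bgkDiagL14 m₁ m₂ n₁ n₂ δ α j : ℝ) * b t j)
    (heqb : ∀ t : ℝ, 0 ≤ t → ∀ j : ℕ,
      b' t j = -(ν₂₂ * n₂ * bgkDiagL12 j : ℝ) * b t j
        - (ν₂₁ * n₁ * bgkDiagL23 m₁ m₂ ε δ α j : ℝ) * b t j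
        + (ν₂₁ * n₁ * bgkDiagL24 m₁ m₂ n₁ n₂ ε δ α j : ℝ) * a t j)
    (ha0 : a 0 0 = 0) (hb0 : b 0 0 = 0)
    (hmom : (Real.sqrt m₁ : ℂ) * a 0 1 + (Real.sqrt m₂ : ℂ) * b 0 1 = 0)
    (hen : a 0 2 + b 0 2 = 0) :
    ∀ t : ℝ, 0 ≤ t →
      (1 / n₁) * ‖a t‖ ^ 2 + (1 / n₂) * ‖b t‖ ^ 2 ≤
        Real.exp (-(2 * min (ν₁₂ * n₂ * (1 - δ))
            (min (ν₁₂ * n₂ * (1 - α))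
              (min (ν₁₁ * n₁ + ν₁₂ * n₂)
                (min (ν₁₂ * n₁ * (m₁ / m₂) * (1 - δ))
                  (min (ν₁₂ * n₁ * (1 - α)) (ν₂₂ * n₂ + ν₁₂ * n₁)))))) * t) *
          ((1 / n₁) * ‖a 0‖ ^ 2 + (1 / n₂) * ‖b 0‖ ^ 2) :=
  zero_mode_exponential_decay_general m₁ m₂ n₁ n₂ ν₁₁ ν₁₂ ν₂₂ ν₂₁ ε δ α hm₁ hm₂ hn₁ hn₂ hν₁₂ hν₂₁
    hcoll hε1 hδ hα a b a' b' hda hdb heqa heqb ha0 hb0 hmom hen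
end

section
/- Let d ≥ 1 be an integer, m₁, m₂ > 0, 0 < ε ≤ 1, 0 ≤ α ≤ 1, and let δ satisfy ((m₁/m₂)ε − 1)/(1 + (m₁/m₂)ε) ≤ δ ≤ 1 and γ satisfy 0 ≤ γ ≤ (m₁/d)(1−δ)[(1 + (m₁/m₂)ε)δ + 1 − (m₁/m₂)ε]. Then the coefficient γ̃ := (1/d) ε m₁ (1−δ)((m₁/m₂) ε (δ−1) + δ + 1) − ε γ is nonnegative, and consequently, for any T₁ > 0, T₂ > 0 and any u₁, u₂ ∈ ℝ^d, the interspecies temperature T₂₁ = γ̃ |u₁ − u₂|² + ε(1−α) T₁ + (1 − ε(1−α)) T₂ is strictly positive. -/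
/-- Under the parameter restrictions of the two-species BGK model
(`0 < ε ≤ 1`, `0 ≤ α ≤ 1`, `((m₁/m₂)ε − 1)/(1 + (m₁/m₂)ε) ≤ δ ≤ 1` and
`0 ≤ γ ≤ (m₁/d)(1−δ)[(1 + (m₁/m₂)ε)δ + 1 − (m₁/m₂)ε]`), the coefficient
`γ̃ = (1/d)εm₁(1−δ)((m₁/m₂)ε(δ−1)+δ+1) − εγ` is nonnegative, and consequently the
interspecies temperature `T₂₁ = γ̃|u₁−u₂|² + ε(1−α)T₁ + (1−ε(1−α))T₂` is strictly
positive for all `T₁, T₂ > 0` and `u₁, u₂ ∈ ℝ^d`. -/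
theorem temperature21_pos (d : ℕ) (hd : 1 ≤ d) (m₁ m₂ : ℝ) (hm₁ : 0 < m₁) (hm₂ : 0 < m₂)
    (ε : ℝ) (hε0 : 0 < ε) (hε1 : ε ≤ 1) (α : ℝ) (hα0 : 0 ≤ α) (hα1 : α ≤ 1)
    (δ : ℝ) (hδl : ((m₁ / m₂) * ε - 1) / (1 + (m₁ / m₂) * ε) ≤ δ) (hδr : δ ≤ 1)
    (γ : ℝ) (hγ0 : 0 ≤ γ)
    (hγ1 : γ ≤ (m₁ / (d : ℝ)) * (1 - δ) * ((1 + (m₁ / m₂) * ε) * δ + 1 - (m₁ / m₂) * ε)) :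
    0 ≤ (1 / (d : ℝ)) * ε * m₁ * (1 - δ) * ((m₁ / m₂) * ε * (δ - 1) + δ + 1) - ε * γ ∧
    ∀ (T₁ T₂ : ℝ), 0 < T₁ → 0 < T₂ → ∀ u₁ u₂ : EuclideanSpace ℝ (Fin d),
      0 < ((1 / (d : ℝ)) * ε * m₁ * (1 - δ) * ((m₁ / m₂) * ε * (δ - 1) + δ + 1) - ε * γ)
            * ‖u₁ - u₂‖ ^ 2
          + ε * (1 - α) * T₁ + (1 - ε * (1 - α)) * T₂ := by
  have hd' : (0:ℝ) < (d:ℝ) := by exact_mod_cast hd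
  have key : 0 ≤ (1 / (d : ℝ)) * ε * m₁ * (1 - δ) * ((m₁ / m₂) * ε * (δ - 1) + δ + 1) - ε * γ := by
    have h : ε * γ ≤ ε * ((m₁ / (d : ℝ)) * (1 - δ) * ((1 + (m₁ / m₂) * ε) * δ + 1 - (m₁ / m₂) * ε)) :=
      mul_le_mul_of_nonneg_left hγ1 hε0.le
    have heq : (1 / (d : ℝ)) * ε * m₁ * (1 - δ) * ((m₁ / m₂) * ε * (δ - 1) + δ + 1)
        = ε * ((m₁ / (d : ℝ)) * (1 - δ) * ((1 + (m₁ / m₂) * ε) * δ + 1 - (m₁ / m₂) * ε)) := by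
      field_simp
      ring
    rw [heq]
    linarith
  refine ⟨key, fun T₁ T₂ hT₁ hT₂ u₁ u₂ => ?_⟩
  have h1 : 0 ≤ ((1 / (d : ℝ)) * ε * m₁ * (1 - δ) * ((m₁ / m₂) * ε * (δ - 1) + δ + 1) - ε * γ)
      * ‖u₁ - u₂‖ ^ 2 := mul_nonneg key (by positivity)
  nlinarith [mul_pos hε0 hT₁, mul_nonneg (mul_nonneg hε0.le (sub_nonneg.2 hα1)) hT₁.le,
    mul_nonneg (sub_nonneg.2 (mul_le_one₀ hε1 (by linarith) (by linarith : 1 - α ≤ 1))) hT₂.le]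
end
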